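/- Let q be an odd prime power and let S be a special spread of PG(3,q) with respect to a symplectic polarity ζ. Let Γ be the complement of the graph obtained from Sp(4,q) by removing, for each pair {l, l^ζ} of orthogonal hyperbolic lines in S, all edges between points of l and points of l^ζ. Then Γ is a divisible design graph with parameters ((q²+1)(q+1), q³+q+1, q³−q²+q+1, q³−q²+2q, q²+1, q+1), where the classes are the q+1-point parts l and l^ζ of the removed complete bipartite graphs. -/

import Mathlib

namespace Stmt12

/-- Points of PG(3,q): 1-dimensional subspaces of F⁴. -/
def Pt (F : Type*) [Field F] : Type _ :=
  {p : Submodule F (Fin 4 → F) // Module.finrank F p = 1}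

/-- The symplectic graph Sp(4,q). -/
def sp {F : Type*} [Field F] (B : LinearMap.BilinForm F (Fin 4 → F)) :
    SimpleGraph (Pt F) where
  Adj x y := x ≠ y ∧ (∀ u ∈ x.1, ∀ v ∈ y.1, B u v = 0) ∧
    (∀ u ∈ y.1, ∀ v ∈ x.1, B u v = 0)
  symm := ⟨fun _ _ h => ⟨h.1.symm, h.2.2, h.2.1⟩⟩
  loopless := ⟨fun _ h => h.1 rfl⟩

/-- Two points are paired by the special spread S if one lies on a spread line l
and the other on the orthogonal line l^ζ. -/
def Paired {F : Type*} [Field F] (B : LinearMap.BilinForm F (Fin 4 → F))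
    (S : Set (Submodule F (Fin 4 → F))) (x y : Pt F) : Prop :=
  ∃ l ∈ S, (x.1 ≤ l ∧ y.1 ≤ B.orthogonal l) ∨ (y.1 ≤ l ∧ x.1 ≤ B.orthogonal l)

/-- Sp(4,q) with the edges of the K_{q+1,q+1}'s of the spread removed. -/
def Y {F : Type*} [Field F] (B : LinearMap.BilinForm F (Fin 4 → F))
    (S : Set (Submodule F (Fin 4 → F))) : SimpleGraph (Pt F) where
  Adj x y := (sp B).Adj x y ∧ ¬ Paired B S x y
  symm := ⟨fun _ _ h =>
    ⟨h.1.symm, fun ⟨l, hl, hor⟩ => h.2 ⟨l, hl, hor.symm⟩⟩⟩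
  loopless := ⟨fun _ h => (sp B).irrefl h.1⟩

/-- The graph Γ_{q,S}: the complement of Y. -/
def Gamma {F : Type*} [Field F] (B : LinearMap.BilinForm F (Fin 4 → F))
    (S : Set (Submodule F (Fin 4 → F))) : SimpleGraph (Pt F) := (Y B S)ᶜ

end Stmt12

set_option linter.unusedSectionVars false
set_option linter.unusedVariables false

namespace Stmt12Aux

variable {F : Type*} [Field F] [Fintype F]

abbrev V (F : Type*) [Field F] := Fin 4 → F

/-- Points of PG(3,q). -/
abbrev Pt' (F : Type*) [Field F] : Type _ := Stmt12.Pt F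

instance : Finite (Submodule F (V F)) :=
  Finite.of_injective (fun p => (p : Set (V F))) SetLike.coe_injective

instance : Finite (Pt' F) :=
  Finite.of_injective (fun (x : Pt' F) => x.1) (fun a b h => Subtype.ext h)

lemma exists_rep (x : Pt' F) : ∃ v : V F, v ≠ 0 ∧ x.1 = Submodule.span F {v} := by
  have h1 : x.1 ≠ ⊥ := by
    intro h
    have := x.2
    rw [h, finrank_bot] at this
    exact one_ne_zero this.symm
  obtain ⟨v, hv, hv0⟩ := Submodule.exists_mem_ne_zero_of_ne_bot h1
  refine ⟨v, hv0, ?_⟩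
  have hle : Submodule.span F {v} ≤ x.1 := by
    rw [Submodule.span_singleton_le_iff_mem]; exact hv
  have := Submodule.eq_of_le_of_finrank_le hle
    (by rw [x.2, finrank_span_singleton hv0])
  exact this.symm

noncomputable def rep (x : Pt' F) : V F := (exists_rep x).choose

lemma rep_ne (x : Pt' F) : rep x ≠ 0 := (exists_rep x).choose_spec.1

lemma rep_span (x : Pt' F) : x.1 = Submodule.span F {rep x} :=
  (exists_rep x).choose_spec.2

lemma rep_mem (x : Pt' F) : rep x ∈ x.1 := by
  rw [rep_span]; exact Submodule.mem_span_singleton_self _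

lemma mem_pt_iff {x : Pt' F} {v : V F} : v ∈ x.1 ↔ ∃ c : F, v = c • rep x := by
  rw [rep_span, Submodule.mem_span_singleton]
  exact ⟨fun ⟨c, hc⟩ => ⟨c, hc.symm⟩, fun ⟨c, hc⟩ => ⟨c, hc.symm⟩⟩

lemma pt_le_iff {x : Pt' F} {W : Submodule F (V F)} : x.1 ≤ W ↔ rep x ∈ W := by
  rw [rep_span, Submodule.span_singleton_le_iff_mem]

lemma pt_eq_of_mem {x y : Pt' F} (h : rep x ∈ y.1) : x = y := by
  have hle : x.1 ≤ y.1 := by rw [pt_le_iff]; exact h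
  have := Submodule.eq_of_le_of_finrank_le hle (by rw [x.2, y.2])
  exact Subtype.ext this

/-- The point spanned by a nonzero vector. -/
noncomputable def pt (v : V F) (hv : v ≠ 0) : Pt' F :=
  ⟨Submodule.span F {v}, finrank_span_singleton hv⟩

lemma mem_pt (v : V F) (hv : v ≠ 0) : v ∈ (pt v hv).1 :=
  Submodule.mem_span_singleton_self _

lemma pt_eq (v : V F) (hv : v ≠ 0) {x : Pt' F} (h : v ∈ x.1) : pt v hv = x := by
  apply Subtype.ext
  have hle : (pt v hv).1 ≤ x.1 := by
    show Submodule.span F {v} ≤ x.1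
    rw [Submodule.span_singleton_le_iff_mem]; exact h
  exact Submodule.eq_of_le_of_finrank_le hle (by rw [x.2, (pt v hv).2])

/-- generic fiber counting -/
lemma fiber_count {α β : Type*} [Finite α] [Finite β] (f : α → β)
    (hf : Function.Surjective f) (k : ℕ) (hk : ∀ b, Nat.card {a // f a = b} = k) :
    Nat.card α = Nat.card β * k := by
  classical
  cases nonempty_fintype α
  cases nonempty_fintype β
  rw [← Nat.card_congr (Equiv.sigmaFiberEquiv f)]
  rw [Nat.card_eq_fintype_card, Fintype.card_sigma]
  rw [Nat.card_eq_fintype_card]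
  rw [Finset.sum_congr rfl (fun b _ => ?_), Finset.sum_const, smul_eq_mul,
    Finset.card_univ]
  rw [← Nat.card_eq_fintype_card]
  exact hk b

lemma card_submodule_set (W : Submodule F (V F)) :
    (W : Set (V F)).ncard = Fintype.card F ^ Module.finrank F W := by
  rw [← Nat.card_coe_set_eq]
  have : Nat.card (W : Set (V F)) = Nat.card W := rfl
  rw [this]
  haveI : Fintype W := Fintype.ofFinite _
  rw [Nat.card_eq_fintype_card]
  exact Module.card_eq_pow_finrank

lemma card_nonzero_submodule (W : Submodule F (V F)) :
    {v : V F | v ≠ 0 ∧ v ∈ W}.ncard = Fintype.card F ^ Module.finrank F W - 1 := by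
  have hset : {v : V F | v ≠ 0 ∧ v ∈ W} = (W : Set (V F)) \ {0} := by
    ext v; simp [and_comm]
  rw [hset, Set.ncard_diff (by simp [Set.singleton_subset_iff]), Set.ncard_singleton,
    card_submodule_set]


/-- Core counting lemma: points satisfying a scaling-invariant predicate,
counted via nonzero vectors. -/
lemma count_pts (Q : V F → Prop)
    (hQ : ∀ c : F, c ≠ 0 → ∀ v, Q v → Q (c • v)) :
    {v : V F | v ≠ 0 ∧ Q v}.ncard = {x : Pt' F | Q (rep x)}.ncard * (Fintype.card F - 1) := by
  classical
  rw [← Nat.card_coe_set_eq, ← Nat.card_coe_set_eq]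
  have hQiff : ∀ (x : Pt' F) (v : V F), v ≠ 0 → v ∈ x.1 → (Q v ↔ Q (rep x)) := by
    intro x v hv hvx
    obtain ⟨c, hc⟩ := mem_pt_iff.mp hvx
    have hc0 : c ≠ 0 := by rintro rfl; simp at hc; exact hv hc
    constructor
    · intro h
      have := hQ c⁻¹ (inv_ne_zero hc0) v h
      rwa [hc, smul_smul, inv_mul_cancel₀ hc0, one_smul] at this
    · intro h
      have := hQ c hc0 _ h
      rwa [← hc] at this
  set T := {v : V F | v ≠ 0 ∧ Q v} with hT
  set P := {x : Pt' F | Q (rep x)} with hP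
  have memT : ∀ v : T, (v : V F) ≠ 0 ∧ Q v := fun v => v.2
  have hmemP : ∀ a : T, pt a.1 (memT a).1 ∈ P :=
    fun a => (hQiff (pt a.1 (memT a).1) a.1 (memT a).1 (mem_pt a.1 (memT a).1)).mp (memT a).2
  refine fiber_count (f := fun a : T => (⟨pt a.1 (memT a).1, hmemP a⟩ : P)) ?_
    (Fintype.card F - 1) ?_
  · rintro ⟨x, hx⟩
    refine ⟨⟨rep x, rep_ne x, hx⟩, ?_⟩
    apply Subtype.ext
    exact pt_eq _ (memT ⟨rep x, rep_ne x, hx⟩).1 (rep_mem x)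
  · rintro ⟨x, hx⟩
    have e : {a : T // (⟨pt a.1 (memT a).1, hmemP a⟩ : P) = ⟨x, hx⟩} ≃
        {v : V F // v ≠ 0 ∧ v ∈ x.1} := by
      refine ⟨fun a => ⟨a.1.1, (memT a.1).1, ?_⟩,
        fun v => ⟨⟨v.1, v.2.1, (hQiff x v.1 v.2.1 v.2.2).mpr hx⟩, ?_⟩, ?_, ?_⟩
      · have h2 : pt a.1.1 (memT a.1).1 = x := congrArg Subtype.val a.2
        have h4 := mem_pt a.1.1 (memT a.1).1
        rwa [h2] at h4
      · apply Subtype.ext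
        exact pt_eq v.1 v.2.1 v.2.2
      · intro a; apply Subtype.ext; apply Subtype.ext; rfl
      · intro v; apply Subtype.ext; rfl
    rw [Nat.card_congr e]
    have h3 : {v : V F // v ≠ 0 ∧ v ∈ x.1} = {v : V F | v ≠ 0 ∧ v ∈ x.1} := rfl
    rw [h3, Nat.card_coe_set_eq, card_nonzero_submodule, x.2, pow_one]


section Form

variable (B : LinearMap.BilinForm F (V F)) (S : Set (Submodule F (V F)))

lemma skew (halt : ∀ v, B v v = 0) (u v : V F) : B u v = - B v u := by
  have h := halt (u + v)
  simp only [map_add, LinearMap.add_apply, halt] at h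
  linear_combination h

lemma isRefl (halt : ∀ v, B v v = 0) : B.IsRefl := by
  intro u v h
  rw [skew B halt v u, h, neg_zero]

lemma finrank_V : Module.finrank F (V F) = 4 := by
  simp [Module.finrank_fintype_fun_eq_card]

/-- kernel of a nonzero functional has dimension 3 -/
lemma finrank_ker (hnd : ∀ v, (∀ w, B v w = 0) → v = 0) {v : V F} (hv : v ≠ 0) :
    Module.finrank F (LinearMap.ker (B v)) = 3 := by
  have hr : LinearMap.range (B v) = ⊤ := by
    have h1 : ∃ w, B v w ≠ 0 := by
      by_contra h
      push_neg at h
      exact hv (hnd v h)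
    obtain ⟨w, hw⟩ := h1
    rw [eq_top_iff]
    intro c _
    refine ⟨(c / B v w) • w, ?_⟩
    simp [div_mul_cancel₀, hw]
  have := LinearMap.finrank_range_add_finrank_ker (B v)
  rw [hr, finrank_top, Module.finrank_self, finrank_V] at this
  omega

lemma line_unique (hpart : ∀ v : V F, v ≠ 0 → ∃! l, l ∈ S ∧ v ∈ l)
    {l l' : Submodule F (V F)} (hl : l ∈ S) (hl' : l' ∈ S) {v : V F}
    (hv : v ≠ 0) (hvl : v ∈ l) (hvl' : v ∈ l') : l = l' := by
  obtain ⟨m, _, hu⟩ := hpart v hv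
  rw [hu l ⟨hl, hvl⟩, hu l' ⟨hl', hvl'⟩]

variable (hpart : ∀ v : V F, v ≠ 0 → ∃! l, l ∈ S ∧ v ∈ l)

/-- the spread line through a point -/
noncomputable def lineOf (x : Pt' F) : Submodule F (V F) :=
  (hpart (rep x) (rep_ne x)).exists.choose

lemma lineOf_mem (x : Pt' F) : lineOf S hpart x ∈ S :=
  (hpart (rep x) (rep_ne x)).exists.choose_spec.1

lemma rep_mem_lineOf (x : Pt' F) : rep x ∈ lineOf S hpart x :=
  (hpart (rep x) (rep_ne x)).exists.choose_spec.2

lemma lineOf_eq {x : Pt' F} {l : Submodule F (V F)} (hl : l ∈ S)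
    (h : rep x ∈ l) : lineOf S hpart x = l :=
  line_unique S hpart (lineOf_mem S hpart x) hl (rep_ne x) (rep_mem_lineOf S hpart x) h


lemma mem_orth_iff {l : Submodule F (V F)} {v : V F} :
    v ∈ B.orthogonal l ↔ ∀ n ∈ l, B n v = 0 := Iff.rfl

lemma lineOrth_mem (hclosed : ∀ l ∈ S, B.orthogonal l ∈ S) (x : Pt' F) :
    B.orthogonal (lineOf S hpart x) ∈ S :=
  hclosed _ (lineOf_mem S hpart x)

lemma orth_le_ker (x : Pt' F) :
    B.orthogonal (lineOf S hpart x) ≤ LinearMap.ker (B (rep x)) := by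
  intro v hv
  simp only [LinearMap.mem_ker]
  exact hv (rep x) (rep_mem_lineOf S hpart x)

lemma orth_orth (halt : ∀ v, B v v = 0)
    (hline : ∀ l ∈ S, Module.finrank F l = 2)
    (hclosed : ∀ l ∈ S, B.orthogonal l ∈ S)
    {l : Submodule F (V F)} (hl : l ∈ S) :
    B.orthogonal (B.orthogonal l) = l := by
  have h1 : l ≤ B.orthogonal (B.orthogonal l) :=
    LinearMap.BilinForm.le_orthogonal_orthogonal (isRefl B halt)
  have h2 : B.orthogonal (B.orthogonal l) ∈ S := hclosed _ (hclosed _ hl)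
  exact (Submodule.eq_of_le_of_finrank_le h1
    (le_of_eq (by rw [hline _ h2, hline _ hl]))).symm

lemma rep_not_mem_lineOrth
    (hhyp : ∀ l ∈ S, ¬ ∀ u ∈ l, ∀ v ∈ l, B u v = 0)
    (hclosed : ∀ l ∈ S, B.orthogonal l ∈ S) (x : Pt' F) :
    rep x ∉ B.orthogonal (lineOf S hpart x) := by
  intro h
  have heq : lineOf S hpart x = B.orthogonal (lineOf S hpart x) :=
    lineOf_eq S hpart (lineOrth_mem B S hpart hclosed x) h
  refine hhyp _ (lineOf_mem S hpart x) ?_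
  intro u hu v hv
  rw [heq] at hv
  exact hv u hu

include hpart in
lemma S_inter {l l' : Submodule F (V F)} (hl : l ∈ S) (hl' : l' ∈ S)
    (hne : l ≠ l') {v : V F} (h1 : v ∈ l) (h2 : v ∈ l') : v = 0 := by
  by_contra hv
  exact hne (line_unique S hpart hl hl' hv h1 h2)

/-- characterization of Paired -/
lemma paired_iff (halt : ∀ v, B v v = 0)
    (hline : ∀ l ∈ S, Module.finrank F l = 2)
    (hclosed : ∀ l ∈ S, B.orthogonal l ∈ S) (x z : Pt' F) :
    Stmt12.Paired B S x z ↔ rep z ∈ B.orthogonal (lineOf S hpart x) := by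
  constructor
  · rintro ⟨l, hl, ⟨hxl, hzl⟩ | ⟨hzl, hxl⟩⟩
    · have : lineOf S hpart x = l := lineOf_eq S hpart hl (pt_le_iff.mp hxl)
      rw [this]
      exact pt_le_iff.mp hzl
    · have h1 : lineOf S hpart x = B.orthogonal l :=
        lineOf_eq S hpart (hclosed _ hl) (pt_le_iff.mp hxl)
      rw [h1, orth_orth B S halt hline hclosed hl]
      exact pt_le_iff.mp hzl
  · intro h
    exact ⟨lineOf S hpart x, lineOf_mem S hpart x,
      Or.inl ⟨pt_le_iff.mpr (rep_mem_lineOf S hpart x), pt_le_iff.mpr h⟩⟩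


lemma orth_pts_iff (x z : Pt' F) :
    (∀ u ∈ x.1, ∀ v ∈ z.1, B u v = 0) ↔ B (rep x) (rep z) = 0 := by
  constructor
  · intro h; exact h _ (rep_mem x) _ (rep_mem z)
  · intro h u hu v hv
    obtain ⟨c, rfl⟩ := mem_pt_iff.mp hu
    obtain ⟨d, rfl⟩ := mem_pt_iff.mp hv
    simp [map_smul, smul_eq_mul, h]

include hpart in
lemma gamma_adj (halt : ∀ v, B v v = 0)
    (hline : ∀ l ∈ S, Module.finrank F l = 2)
    (hhyp : ∀ l ∈ S, ¬ ∀ u ∈ l, ∀ v ∈ l, B u v = 0)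
    (hclosed : ∀ l ∈ S, B.orthogonal l ∈ S) (x z : Pt' F) :
    (Stmt12.Gamma B S).Adj x z ↔
      (B (rep x) (rep z) ≠ 0 ∨ rep z ∈ B.orthogonal (lineOf S hpart x)) := by
  have hG : (Stmt12.Gamma B S).Adj x z ↔ x ≠ z ∧ ¬ (Stmt12.Y B S).Adj x z := Iff.rfl
  have hYadj : (Stmt12.Y B S).Adj x z ↔
      ((Stmt12.sp B).Adj x z ∧ ¬ Stmt12.Paired B S x z) := Iff.rfl
  have hsp : (Stmt12.sp B).Adj x z ↔ (x ≠ z ∧ (∀ u ∈ x.1, ∀ v ∈ z.1, B u v = 0) ∧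
      (∀ u ∈ z.1, ∀ v ∈ x.1, B u v = 0)) := Iff.rfl
  rw [hG, hYadj]
  constructor
  · rintro ⟨hne, hnY⟩
    by_cases hp : Stmt12.Paired B S x z
    · exact Or.inr ((paired_iff B S hpart halt hline hclosed x z).mp hp)
    · left
      intro hBz
      apply hnY
      refine ⟨hsp.mpr ⟨hne, (orth_pts_iff B x z).mpr hBz, (orth_pts_iff B z x).mpr ?_⟩, hp⟩
      rw [skew B halt, hBz, neg_zero]
  · intro h
    have hne : x ≠ z := by
      rintro rfl
      rcases h with h | h
      · exact h (halt _)
      · exact rep_not_mem_lineOrth B S hpart hhyp hclosed x h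
    refine ⟨hne, ?_⟩
    rintro ⟨hsp', hnp⟩
    rcases h with h | h
    · exact h ((orth_pts_iff B x z).mp (hsp.mp hsp').2.1)
    · exact hnp ((paired_iff B S hpart halt hline hclosed x z).mpr h)

lemma ker_not_le (hnd : ∀ v, (∀ w, B v w = 0) → v = 0) {x y : Pt' F} (hxy : x ≠ y) :
    ¬ (LinearMap.ker (B (rep x)) ≤ LinearMap.ker (B (rep y))) := by
  intro hle
  have hfne : ∃ w, B (rep x) w ≠ 0 := by
    by_contra hcon
    push_neg at hcon
    exact rep_ne x (hnd _ hcon)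
  obtain ⟨w, hw⟩ := hfne
  set c : F := B (rep y) w / B (rep x) w with hc
  have hg : ∀ v, B (rep y) v = c * B (rep x) v := by
    intro v
    have hker : v - (B (rep x) v / B (rep x) w) • w ∈ LinearMap.ker (B (rep x)) := by
      simp only [LinearMap.mem_ker, map_sub, map_smul, smul_eq_mul]
      field_simp
      ring
    have h2 := hle hker
    simp only [LinearMap.mem_ker, map_sub, map_smul, smul_eq_mul] at h2
    have h3 : B (rep y) v = B (rep x) v / B (rep x) w * B (rep y) w := by
      linear_combination h2
    rw [h3, hc]
    field_simp
  have h4 : ∀ v, B (rep y - c • rep x) v = 0 := by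
    intro v
    simp only [map_sub, LinearMap.sub_apply, map_smul, LinearMap.smul_apply, smul_eq_mul]
    rw [hg v]
    ring
  have h5 := hnd _ h4
  have h6 : rep y = c • rep x := by
    have := sub_eq_zero.mp h5
    exact this
  exact hxy (pt_eq_of_mem (mem_pt_iff.mpr ⟨c, h6⟩)).symm

lemma finrank_ker_inf (hnd : ∀ v, (∀ w, B v w = 0) → v = 0) {x y : Pt' F} (hxy : x ≠ y) :
    Module.finrank F
      ((LinearMap.ker (B (rep x))) ⊓ (LinearMap.ker (B (rep y))) : Submodule F (V F)) = 2 := by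
  set Kx := LinearMap.ker (B (rep x))
  set Ky := LinearMap.ker (B (rep y))
  have h3x : Module.finrank F Kx = 3 := finrank_ker B hnd (rep_ne x)
  have h3y : Module.finrank F Ky = 3 := finrank_ker B hnd (rep_ne y)
  have hlt : Kx < Kx ⊔ Ky := by
    rcases lt_or_eq_of_le (le_sup_left : Kx ≤ Kx ⊔ Ky) with h | h
    · exact h
    · exfalso
      exact ker_not_le B hnd hxy.symm (le_trans le_sup_right h.symm.le)
  have hsup4 : Module.finrank F (Kx ⊔ Ky : Submodule F (V F)) = 4 := by
    have h1 := Submodule.finrank_lt_finrank_of_lt hlt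
    have h2 := Submodule.finrank_le (Kx ⊔ Ky : Submodule F (V F))
    rw [finrank_V] at h2
    omega
  have := Submodule.finrank_sup_add_finrank_inf_eq Kx Ky
  omega

include hpart in
lemma finrank_orth_inf_ker (halt : ∀ v, B v v = 0)
    (hnd : ∀ v, (∀ w, B v w = 0) → v = 0)
    (hline : ∀ l ∈ S, Module.finrank F l = 2)
    (hclosed : ∀ l ∈ S, B.orthogonal l ∈ S)
    {x y : Pt' F} (hll : lineOf S hpart x ≠ lineOf S hpart y) :
    Module.finrank F
      ((B.orthogonal (lineOf S hpart x)) ⊓ (LinearMap.ker (B (rep y))) : Submodule F (V F))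
      = 1 := by
  set Mx := B.orthogonal (lineOf S hpart x) with hMx
  set Ky := LinearMap.ker (B (rep y))
  have h2 : Module.finrank F Mx = 2 := hline _ (lineOrth_mem B S hpart hclosed x)
  have h3 : Module.finrank F Ky = 3 := finrank_ker B hnd (rep_ne y)
  have hnle : ¬ (Mx ≤ Ky) := by
    intro hle
    have h4 : rep y ∈ B.orthogonal Mx := by
      intro n hn
      have h5 : B (rep y) n = 0 := hle hn
      show B n (rep y) = 0
      rw [skew B halt, h5, neg_zero]
    rw [hMx, orth_orth B S halt hline hclosed (lineOf_mem S hpart x)] at h4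
    exact hll (lineOf_eq S hpart (lineOf_mem S hpart x) h4).symm
  have hlt : Mx ⊓ Ky < Mx := by
    rcases lt_or_eq_of_le (inf_le_left : Mx ⊓ Ky ≤ Mx) with h | h
    · exact h
    · exact absurd (le_trans h.symm.le (inf_le_right : Mx ⊓ Ky ≤ Ky)) hnle
  have hup := Submodule.finrank_lt_finrank_of_lt hlt
  have hlow : 1 ≤ Module.finrank F (Mx ⊓ Ky : Submodule F (V F)) := by
    have hg := Submodule.finrank_sup_add_finrank_inf_eq Mx Ky
    have hle4 := Submodule.finrank_le (Mx ⊔ Ky : Submodule F (V F))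
    rw [finrank_V] at hle4
    omega
  omega

include hpart in
lemma lineOrth_ne (halt : ∀ v, B v v = 0)
    (hline : ∀ l ∈ S, Module.finrank F l = 2)
    (hclosed : ∀ l ∈ S, B.orthogonal l ∈ S)
    {x y : Pt' F} (hll : lineOf S hpart x ≠ lineOf S hpart y) :
    B.orthogonal (lineOf S hpart x) ≠ B.orthogonal (lineOf S hpart y) := by
  intro h
  apply hll
  have := congrArg B.orthogonal h
  rwa [orth_orth B S halt hline hclosed (lineOf_mem S hpart x),
    orth_orth B S halt hline hclosed (lineOf_mem S hpart y)] at this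


include hpart in
lemma count_S (hline : ∀ l ∈ S, Module.finrank F l = 2) :
    {v : V F | v ≠ 0}.ncard = S.ncard * (Fintype.card F ^ 2 - 1) := by
  classical
  rw [← Nat.card_coe_set_eq, ← Nat.card_coe_set_eq]
  have memNZ : ∀ v : {v : V F // v ≠ 0}, (v : V F) ≠ 0 := fun v => v.2
  refine fiber_count
    (f := fun v : ↥{v : V F | v ≠ 0} =>
      (⟨(hpart v.1 v.2).exists.choose, (hpart v.1 v.2).exists.choose_spec.1⟩ : ↥S)) ?_
    (Fintype.card F ^ 2 - 1) ?_
  · rintro ⟨l, hl⟩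
    have hlb : l ≠ ⊥ := by
      intro hbot
      have := hline l hl
      rw [hbot, finrank_bot] at this
      omega
    obtain ⟨v, hv, hv0⟩ := Submodule.exists_mem_ne_zero_of_ne_bot hlb
    refine ⟨⟨v, hv0⟩, ?_⟩
    apply Subtype.ext
    exact line_unique S hpart (hpart v hv0).exists.choose_spec.1 hl hv0
      (hpart v hv0).exists.choose_spec.2 hv
  · rintro ⟨l, hl⟩
    have e : {a : ↥{v : V F | v ≠ 0} //
        (⟨(hpart a.1 a.2).exists.choose, (hpart a.1 a.2).exists.choose_spec.1⟩ : ↥S)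
          = ⟨l, hl⟩} ≃ {v : V F // v ≠ 0 ∧ v ∈ l} := by
      refine ⟨fun a => ⟨a.1.1, a.1.2, ?_⟩, fun v => ⟨⟨v.1, v.2.1⟩, ?_⟩, ?_, ?_⟩
      · have h2 : (hpart a.1.1 a.1.2).exists.choose = l := congrArg Subtype.val a.2
        have h3 := (hpart a.1.1 a.1.2).exists.choose_spec.2
        rwa [h2] at h3
      · apply Subtype.ext
        exact line_unique S hpart (hpart v.1 v.2.1).exists.choose_spec.1 hl v.2.1
          (hpart v.1 v.2.1).exists.choose_spec.2 v.2.2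
      · intro a; apply Subtype.ext; apply Subtype.ext; rfl
      · intro v; apply Subtype.ext; rfl
    rw [Nat.card_congr e]
    have h3 : {v : V F // v ≠ 0 ∧ v ∈ l} = ↥{v : V F | v ≠ 0 ∧ v ∈ l} := rfl
    rw [h3, Nat.card_coe_set_eq, card_nonzero_submodule, hline l hl]

end Form

end Stmt12Aux


set_option maxHeartbeats 2000000 in
open Stmt12 in
/-- Γ_{q,S} is a divisible design graph with parameters
((q²+1)(q+1), q³+q+1, q³−q²+q+1, q³−q²+2q, q²+1, q+1), the classes being the
lines of the special spread S. -/
theorem stmt12 {F : Type*} [Field F] [Fintype F] (q : ℕ)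
    (hq : Fintype.card F = q) (hodd : Odd q)
    (B : LinearMap.BilinForm F (Fin 4 → F))
    (halt : ∀ v, B v v = 0)
    (hnd : ∀ v, (∀ w, B v w = 0) → v = 0)
    (S : Set (Submodule F (Fin 4 → F)))
    (hline : ∀ l ∈ S, Module.finrank F l = 2)
    (hhyp : ∀ l ∈ S, ¬ ∀ u ∈ l, ∀ v ∈ l, B u v = 0)
    (hpart : ∀ v : Fin 4 → F, v ≠ 0 → ∃! l, l ∈ S ∧ v ∈ l)
    (hclosed : ∀ l ∈ S, B.orthogonal l ∈ S) :
    Nat.card (Pt F) = (q ^ 2 + 1) * (q + 1) ∧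
    S.ncard = q ^ 2 + 1 ∧
    (∀ l ∈ S, {x : Pt F | x.1 ≤ l}.ncard = q + 1) ∧
    (∀ x : Pt F, {y | (Gamma B S).Adj x y}.ncard = q ^ 3 + q + 1) ∧
    (∀ x y : Pt F, x ≠ y → (∃ l ∈ S, x.1 ≤ l ∧ y.1 ≤ l) →
      {z | (Gamma B S).Adj x z ∧ (Gamma B S).Adj y z}.ncard
        = q ^ 3 - q ^ 2 + q + 1) ∧
    (∀ x y : Pt F, ¬ (∃ l ∈ S, x.1 ≤ l ∧ y.1 ≤ l) →
      {z | (Gamma B S).Adj x z ∧ (Gamma B S).Adj y z}.ncard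
        = q ^ 3 - q ^ 2 + 2 * q) := by
  classical
  open Stmt12Aux in
  subst hq
  set q := Fintype.card F with hqdef
  have hq2 : 2 ≤ q := Fintype.one_lt_card
  have hq1 : 1 ≤ q := by omega
  have h1q2 : 1 ≤ q ^ 2 := Nat.one_le_pow _ _ (by omega)
  have h2q2 : 2 ≤ q ^ 2 := le_trans hq2 (Nat.le_self_pow two_ne_zero q)
  have h1q4 : 1 ≤ q ^ 4 := Nat.one_le_pow _ _ (by omega)
  have hp23 : q ^ 2 ≤ q ^ 3 := Nat.pow_le_pow_right (by omega) (by omega)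
  have cancel : ∀ a b : ℕ, a * (q - 1) = b * (q - 1) → a = b :=
    fun a b h => Nat.eq_of_mul_eq_mul_right (by omega) h
  have cardV : Nat.card (V F) = q ^ 4 := by
    rw [Nat.card_eq_fintype_card, Fintype.card_fun, Fintype.card_fin]
  have cardNZ : {v : V F | v ≠ 0}.ncard + 1 = q ^ 4 := by
    have h := Set.ncard_add_ncard_compl {v : V F | v ≠ 0}
    have hc : {v : V F | v ≠ 0}ᶜ = {(0 : V F)} := by ext v; simp
    rw [hc, Set.ncard_singleton, cardV] at h
    exact h
  -- Part 1
  have part1 : Nat.card (Pt F) = (q ^ 2 + 1) * (q + 1) := by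
    have hcount := count_pts (F := F) (Q := fun _ => True) (by intro c hc v hv; trivial)
    have h1 : {v : V F | v ≠ 0 ∧ True} = {v : V F | v ≠ 0} := by simp
    have h2 : {x : Pt' F | True} = Set.univ := by simp
    rw [h1, h2, Set.ncard_univ] at hcount
    apply cancel
    rw [← hcount]
    zify [hq1]
    zify at cardNZ
    linear_combination cardNZ
  -- Part 2
  have part2 : S.ncard = q ^ 2 + 1 := by
    have hS := count_S S hpart hline
    apply Nat.eq_of_mul_eq_mul_right (show 0 < q ^ 2 - 1 by omega)
    rw [← hS]
    zify [h1q2]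
    zify at cardNZ
    linear_combination cardNZ
  -- Part 3
  have part3 : ∀ l ∈ S, {x : Pt F | x.1 ≤ l}.ncard = q + 1 := by
    intro l hl
    have hc := count_pts (F := F) (Q := fun v => v ∈ l)
      (fun c hc v hv => Submodule.smul_mem _ _ hv)
    have hset : {x : Pt' F | rep x ∈ l} = {x : Pt' F | x.1 ≤ l} :=
      Set.ext fun x => pt_le_iff.symm
    rw [hset] at hc
    have hvec : {v : V F | v ≠ 0 ∧ v ∈ l}.ncard = q ^ 2 - 1 := by
      rw [card_nonzero_submodule, hline l hl]
    apply cancel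
    rw [← hc, hvec]
    zify [h1q2, hq1]
    ring
  -- Part 4
  have part4 : ∀ x : Pt F, {y | (Gamma B S).Adj x y}.ncard = q ^ 3 + q + 1 := by
    intro x
    set Mx := B.orthogonal (lineOf S hpart x) with hMxdef
    set Kx := LinearMap.ker (B (rep x)) with hKxdef
    have hQ : ∀ c : F, c ≠ 0 → ∀ v, (B (rep x) v ≠ 0 ∨ v ∈ Mx) →
        (B (rep x) (c • v) ≠ 0 ∨ c • v ∈ Mx) := by
      intro c hc v hv
      rcases hv with h | h
      · left; rw [map_smul, smul_eq_mul]; exact mul_ne_zero hc h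
      · right; exact Submodule.smul_mem _ _ h
    have hc := count_pts (F := F) (Q := fun v => B (rep x) v ≠ 0 ∨ v ∈ Mx) hQ
    have hset : {z : Pt' F | B (rep x) (rep z) ≠ 0 ∨ rep z ∈ Mx} =
        {y | (Gamma B S).Adj x y} :=
      Set.ext fun z => (gamma_adj B S hpart halt hline hhyp hclosed x z).symm
    rw [hset] at hc
    have hMK : (Mx : Set (V F)) ⊆ (Kx : Set (V F)) :=
      fun v hv => orth_le_ker B S hpart x hv
    have hKxcard : (Kx : Set (V F)).ncard = q ^ 3 := by
      rw [card_submodule_set, finrank_ker B hnd (rep_ne x)]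
    have hMxcard : (Mx : Set (V F)).ncard = q ^ 2 := by
      rw [card_submodule_set, hline _ (lineOrth_mem B S hpart hclosed x)]
    have hdiff := Set.ncard_diff_add_ncard_of_subset hMK
    rw [hKxcard, hMxcard] at hdiff
    have hTeq : {v : V F | v ≠ 0 ∧ (B (rep x) v ≠ 0 ∨ v ∈ Mx)} =
        {v : V F | v ≠ 0} \ ((Kx : Set (V F)) \ (Mx : Set (V F))) := by
      ext v
      simp only [Set.mem_setOf_eq, Set.mem_diff, SetLike.mem_coe, hKxdef,
        LinearMap.mem_ker]
      tauto
    have hsub2 : ((Kx : Set (V F)) \ (Mx : Set (V F))) ⊆ {v : V F | v ≠ 0} := by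
      rintro v ⟨hvK, hvM⟩
      show v ≠ 0
      rintro rfl
      exact hvM (Submodule.zero_mem Mx)
    have hmain := Set.ncard_diff_add_ncard_of_subset hsub2
    rw [hTeq] at hc
    apply cancel
    rw [← hc]
    zify [hq1]
    zify at hmain hdiff cardNZ
    linear_combination hmain - hdiff + cardNZ
  -- Part 5
  have part5 : ∀ x y : Pt F, x ≠ y → (∃ l ∈ S, x.1 ≤ l ∧ y.1 ≤ l) →
      {z | (Gamma B S).Adj x z ∧ (Gamma B S).Adj y z}.ncard
        = q ^ 3 - q ^ 2 + q + 1 := by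
    intro x y hxy hex
    obtain ⟨l, hl, hxl, hyl⟩ := hex
    have hlx : lineOf S hpart x = l := lineOf_eq S hpart hl (pt_le_iff.mp hxl)
    have hly : lineOf S hpart y = l := lineOf_eq S hpart hl (pt_le_iff.mp hyl)
    set m := B.orthogonal l with hmdef
    have hQ : ∀ c : F, c ≠ 0 → ∀ v,
        ((B (rep x) v ≠ 0 ∨ v ∈ m) ∧ (B (rep y) v ≠ 0 ∨ v ∈ m)) →
        ((B (rep x) (c • v) ≠ 0 ∨ c • v ∈ m) ∧ (B (rep y) (c • v) ≠ 0 ∨ c • v ∈ m)) := by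
      intro c hc v ⟨h1, h2⟩
      constructor
      · rcases h1 with h | h
        · left; rw [map_smul, smul_eq_mul]; exact mul_ne_zero hc h
        · right; exact Submodule.smul_mem _ _ h
      · rcases h2 with h | h
        · left; rw [map_smul, smul_eq_mul]; exact mul_ne_zero hc h
        · right; exact Submodule.smul_mem _ _ h
    have hc := count_pts (F := F)
      (Q := fun v => (B (rep x) v ≠ 0 ∨ v ∈ m) ∧ (B (rep y) v ≠ 0 ∨ v ∈ m)) hQ
    have hset : {z : Pt' F |
        (B (rep x) (rep z) ≠ 0 ∨ rep z ∈ m) ∧ (B (rep y) (rep z) ≠ 0 ∨ rep z ∈ m)} =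
        {z | (Gamma B S).Adj x z ∧ (Gamma B S).Adj y z} := by
      ext z
      rw [Set.mem_setOf_eq, Set.mem_setOf_eq,
        gamma_adj B S hpart halt hline hhyp hclosed x z,
        gamma_adj B S hpart halt hline hhyp hclosed y z, hlx, hly]
    rw [hset] at hc
    have hxK : rep x ∈ l := hlx ▸ rep_mem_lineOf S hpart x
    have hyK : rep y ∈ l := hly ▸ rep_mem_lineOf S hpart y
    have hmx : ∀ v ∈ m, B (rep x) v = 0 := fun v hv => hv (rep x) hxK
    set N := {v : V F | B (rep x) v ≠ 0 ∧ B (rep y) v ≠ 0} with hNdef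
    have hTsplit : {v : V F | v ≠ 0 ∧
        ((B (rep x) v ≠ 0 ∨ v ∈ m) ∧ (B (rep y) v ≠ 0 ∨ v ∈ m))} =
        ((m : Set (V F)) \ {0}) ∪ N := by
      ext v
      simp only [Set.mem_setOf_eq, Set.mem_union, Set.mem_diff,
        Set.mem_singleton_iff, SetLike.mem_coe, hNdef]
      constructor
      · rintro ⟨hv0, ⟨h1 | h1, h2 | h2⟩⟩
        · right; exact ⟨h1, h2⟩
        · left; exact ⟨h2, hv0⟩
        · left; exact ⟨h1, hv0⟩
        · left; exact ⟨h1, hv0⟩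
      · rintro (⟨hm0, h0⟩ | ⟨h1, h2⟩)
        · exact ⟨h0, Or.inr hm0, Or.inr hm0⟩
        · refine ⟨?_, Or.inl h1, Or.inl h2⟩
          rintro rfl
          rw [map_zero] at h1
          exact h1 rfl
    have hdisj : Disjoint ((m : Set (V F)) \ {0}) N := by
      rw [Set.disjoint_left]
      rintro v ⟨hvm, _⟩ ⟨h1, _⟩
      exact h1 (hmx v hvm)
    have hTcard := Set.ncard_union_eq hdisj
    have hm_mem : m ∈ S := hclosed l hl
    have hmcard : ((m : Set (V F)) \ {0}).ncard + 1 = q ^ 2 := by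
      have hsub : ({0} : Set (V F)) ⊆ (m : Set (V F)) := by
        simp [Set.singleton_subset_iff]
      have := Set.ncard_diff_add_ncard_of_subset hsub
      rw [Set.ncard_singleton, card_submodule_set, hline m hm_mem] at this
      exact this
    have hNcompl : Nᶜ = ((LinearMap.ker (B (rep x)) : Submodule F (V F)) : Set (V F)) ∪
        ((LinearMap.ker (B (rep y)) : Submodule F (V F)) : Set (V F)) := by
      ext v
      simp only [hNdef, Set.mem_compl_iff, Set.mem_setOf_eq, Set.mem_union,
        SetLike.mem_coe, LinearMap.mem_ker]
      tauto
    have hNadd := Set.ncard_add_ncard_compl N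
    rw [hNcompl, cardV] at hNadd
    have hKU := Set.ncard_union_add_ncard_inter
      ((LinearMap.ker (B (rep x)) : Submodule F (V F)) : Set (V F))
      ((LinearMap.ker (B (rep y)) : Submodule F (V F)) : Set (V F))
    rw [← Submodule.coe_inf] at hKU
    have hKxc : ((LinearMap.ker (B (rep x)) : Submodule F (V F)) : Set (V F)).ncard
        = q ^ 3 := by rw [card_submodule_set, finrank_ker B hnd (rep_ne x)]
    have hKyc : ((LinearMap.ker (B (rep y)) : Submodule F (V F)) : Set (V F)).ncard
        = q ^ 3 := by rw [card_submodule_set, finrank_ker B hnd (rep_ne y)]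
    have hKIc : (((LinearMap.ker (B (rep x)) ⊓ LinearMap.ker (B (rep y))) :
        Submodule F (V F)) : Set (V F)).ncard = q ^ 2 := by
      rw [card_submodule_set, finrank_ker_inf B hnd hxy]
    rw [hKxc, hKyc, hKIc] at hKU
    rw [hTsplit] at hc
    rw [hTcard] at hc
    apply cancel
    rw [← hc]
    zify [hq1, hp23]
    zify at hmcard hNadd hKU
    linear_combination hmcard + hNadd - hKU
  -- Part 6
  have part6 : ∀ x y : Pt F, ¬ (∃ l ∈ S, x.1 ≤ l ∧ y.1 ≤ l) →
      {z | (Gamma B S).Adj x z ∧ (Gamma B S).Adj y z}.ncard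
        = q ^ 3 - q ^ 2 + 2 * q := by
    intro x y hnex
    have hll : lineOf S hpart x ≠ lineOf S hpart y := by
      intro h
      exact hnex ⟨lineOf S hpart x, lineOf_mem S hpart x,
        pt_le_iff.mpr (rep_mem_lineOf S hpart x),
        pt_le_iff.mpr (h ▸ rep_mem_lineOf S hpart y)⟩
    have hxy : x ≠ y := by rintro rfl; exact hll rfl
    set Mx := B.orthogonal (lineOf S hpart x) with hMxdef
    set My := B.orthogonal (lineOf S hpart y) with hMydef
    set Kx := LinearMap.ker (B (rep x)) with hKxdef
    set Ky := LinearMap.ker (B (rep y)) with hKydef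
    have hQ : ∀ c : F, c ≠ 0 → ∀ v,
        ((B (rep x) v ≠ 0 ∨ v ∈ Mx) ∧ (B (rep y) v ≠ 0 ∨ v ∈ My)) →
        ((B (rep x) (c • v) ≠ 0 ∨ c • v ∈ Mx) ∧ (B (rep y) (c • v) ≠ 0 ∨ c • v ∈ My)) := by
      intro c hc v ⟨h1, h2⟩
      constructor
      · rcases h1 with h | h
        · left; rw [map_smul, smul_eq_mul]; exact mul_ne_zero hc h
        · right; exact Submodule.smul_mem _ _ h
      · rcases h2 with h | h
        · left; rw [map_smul, smul_eq_mul]; exact mul_ne_zero hc h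
        · right; exact Submodule.smul_mem _ _ h
    have hc := count_pts (F := F)
      (Q := fun v => (B (rep x) v ≠ 0 ∨ v ∈ Mx) ∧ (B (rep y) v ≠ 0 ∨ v ∈ My)) hQ
    have hset : {z : Pt' F |
        (B (rep x) (rep z) ≠ 0 ∨ rep z ∈ Mx) ∧ (B (rep y) (rep z) ≠ 0 ∨ rep z ∈ My)} =
        {z | (Gamma B S).Adj x z ∧ (Gamma B S).Adj y z} := by
      ext z
      rw [Set.mem_setOf_eq, Set.mem_setOf_eq,
        gamma_adj B S hpart halt hline hhyp hclosed x z,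
        gamma_adj B S hpart halt hline hhyp hclosed y z]
    rw [hset] at hc
    -- complements
    set Cx := (Kx : Set (V F)) \ (Mx : Set (V F)) with hCxdef
    set Cy := (Ky : Set (V F)) \ (My : Set (V F)) with hCydef
    have hMKx : (Mx : Set (V F)) ⊆ (Kx : Set (V F)) :=
      fun v hv => orth_le_ker B S hpart x hv
    have hMKy : (My : Set (V F)) ⊆ (Ky : Set (V F)) :=
      fun v hv => orth_le_ker B S hpart y hv
    have hTeq : {v : V F | v ≠ 0 ∧
        ((B (rep x) v ≠ 0 ∨ v ∈ Mx) ∧ (B (rep y) v ≠ 0 ∨ v ∈ My))} =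
        {v : V F | v ≠ 0} \ (Cx ∪ Cy) := by
      ext v
      simp only [Set.mem_setOf_eq, Set.mem_diff, Set.mem_union, hCxdef, hCydef,
        SetLike.mem_coe, hKxdef, hKydef, LinearMap.mem_ker]
      tauto
    have hsub : Cx ∪ Cy ⊆ {v : V F | v ≠ 0} := by
      rintro v (⟨hvK, hvM⟩ | ⟨hvK, hvM⟩) <;>
        · show v ≠ 0
          rintro rfl
          exact hvM (Submodule.zero_mem _)
    have hmain := Set.ncard_diff_add_ncard_of_subset hsub
    have hCU := Set.ncard_union_add_ncard_inter Cx Cy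
    have hCxcard : Cx.ncard + q ^ 2 = q ^ 3 := by
      have := Set.ncard_diff_add_ncard_of_subset hMKx
      rwa [card_submodule_set, card_submodule_set, finrank_ker B hnd (rep_ne x),
        hline _ (lineOrth_mem B S hpart hclosed x)] at this
    have hCycard : Cy.ncard + q ^ 2 = q ^ 3 := by
      have := Set.ncard_diff_add_ncard_of_subset hMKy
      rwa [card_submodule_set, card_submodule_set, finrank_ker B hnd (rep_ne y),
        hline _ (lineOrth_mem B S hpart hclosed y)] at this
    -- Cx ∩ Cy
    have hCICI : Cx ∩ Cy = (((Kx ⊓ Ky : Submodule F (V F)) : Set (V F))) \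
        ((Mx : Set (V F)) ∪ (My : Set (V F))) := by
      ext v
      simp only [hCxdef, hCydef, Set.mem_inter_iff, Set.mem_diff, Set.mem_union,
        SetLike.mem_coe, Submodule.mem_inf]
      tauto
    have hLMx : ((Kx ⊓ Ky : Submodule F (V F)) : Set (V F)) ∩ (Mx : Set (V F)) =
        ((Mx ⊓ Ky : Submodule F (V F)) : Set (V F)) := by
      ext v
      simp only [Set.mem_inter_iff, SetLike.mem_coe, Submodule.mem_inf]
      constructor
      · rintro ⟨⟨_, h2⟩, h3⟩; exact ⟨h3, h2⟩
      · rintro ⟨h1, h2⟩; exact ⟨⟨hMKx h1, h2⟩, h1⟩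
    have hLMy : ((Kx ⊓ Ky : Submodule F (V F)) : Set (V F)) ∩ (My : Set (V F)) =
        ((My ⊓ Kx : Submodule F (V F)) : Set (V F)) := by
      ext v
      simp only [Set.mem_inter_iff, SetLike.mem_coe, Submodule.mem_inf]
      constructor
      · rintro ⟨⟨h1, _⟩, h3⟩; exact ⟨h3, h1⟩
      · rintro ⟨h1, h2⟩; exact ⟨⟨h2, hMKy h1⟩, h1⟩
    have hMxKy : ((Mx ⊓ Ky : Submodule F (V F)) : Set (V F)).ncard = q := by
      rw [card_submodule_set, finrank_orth_inf_ker B S hpart halt hnd hline hclosed hll,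
        pow_one]
    have hMyKx : ((My ⊓ Kx : Submodule F (V F)) : Set (V F)).ncard = q := by
      rw [card_submodule_set, finrank_orth_inf_ker B S hpart halt hnd hline hclosed hll.symm,
        pow_one]
    have hMxMy : Mx ≠ My := lineOrth_ne B S hpart halt hline hclosed hll
    have hMM0 : ((Mx ⊓ Ky : Submodule F (V F)) : Set (V F)) ∩
        ((My ⊓ Kx : Submodule F (V F)) : Set (V F)) = {0} := by
      ext v
      simp only [Set.mem_inter_iff, SetLike.mem_coe, Submodule.mem_inf,
        Set.mem_singleton_iff]
      constructor
      · rintro ⟨⟨h1, _⟩, ⟨h2, _⟩⟩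
        exact S_inter S hpart (lineOrth_mem B S hpart hclosed x)
          (lineOrth_mem B S hpart hclosed y) hMxMy h1 h2
      · rintro rfl
        exact ⟨⟨Submodule.zero_mem _, Submodule.zero_mem _⟩,
          ⟨Submodule.zero_mem _, Submodule.zero_mem _⟩⟩
    have hW := Set.ncard_union_add_ncard_inter
      ((Mx ⊓ Ky : Submodule F (V F)) : Set (V F))
      ((My ⊓ Kx : Submodule F (V F)) : Set (V F))
    rw [hMM0, Set.ncard_singleton, hMxKy, hMyKx] at hW
    -- (Kx⊓Ky) ∩ (Mx ∪ My)
    have hLW : ((Kx ⊓ Ky : Submodule F (V F)) : Set (V F)) ∩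
        ((Mx : Set (V F)) ∪ (My : Set (V F))) =
        ((Mx ⊓ Ky : Submodule F (V F)) : Set (V F)) ∪
        ((My ⊓ Kx : Submodule F (V F)) : Set (V F)) := by
      rw [Set.inter_union_distrib_left, hLMx, hLMy]
    have hLdiff : ((Kx ⊓ Ky : Submodule F (V F)) : Set (V F)) \
        ((Mx : Set (V F)) ∪ (My : Set (V F))) =
        ((Kx ⊓ Ky : Submodule F (V F)) : Set (V F)) \
        (((Kx ⊓ Ky : Submodule F (V F)) : Set (V F)) ∩
          ((Mx : Set (V F)) ∪ (My : Set (V F)))) := by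
      rw [Set.diff_self_inter]
    have hCIcard := Set.ncard_diff_add_ncard_of_subset
      (Set.inter_subset_left (s := ((Kx ⊓ Ky : Submodule F (V F)) : Set (V F)))
        (t := (Mx : Set (V F)) ∪ (My : Set (V F))))
    rw [← hLdiff, hLW] at hCIcard
    have hKIc : ((Kx ⊓ Ky : Submodule F (V F)) : Set (V F)).ncard = q ^ 2 := by
      rw [card_submodule_set, finrank_ker_inf B hnd hxy]
    rw [hKIc] at hCIcard
    -- assemble
    rw [hTeq] at hc
    apply cancel
    rw [← hc]
    zify [hq1, hp23]
    rw [hCICI] at hCU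
    zify at hmain hCU hCxcard hCycard hCIcard hW cardNZ
    linear_combination hmain - hCU - hCxcard - hCycard + hCIcard - hW + cardNZ
  exact ⟨part1, part2, part3, part4, part5, part6⟩
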